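/- Let Ψ₀ be a unit spinor with ω·Ψ₀ = −7Ψ₀ and let T = 2ω − 8e₁₂₃. Then for each vertical basis vector X ∈ {e₁, e₂, e₃}: T·X·Ψ₀ = −(5/3)·X·T·Ψ₀ = 10·X·Ψ₀, and for each horizontal basis vector X ∈ {e₄, e₅, e₆, e₇}: T·X·Ψ₀ = X·T·Ψ₀ = −6·X·Ψ₀. -/
import Mathlib


/-- The negative definite quadratic form on ℝ⁷ (convention eᵢ·eᵢ = −1). -/
noncomputable def Q : QuadraticForm ℝ (Fin 7 → ℝ) :=
  QuadraticMap.weightedSumSquares ℝ (fun _ : Fin 7 => (-1 : ℝ))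

/-- The Clifford generators e₁,…,e₇ (0-indexed: `e i` is e_{i+1}). -/
noncomputable def e (i : Fin 7) : CliffordAlgebra Q := CliffordAlgebra.ι Q (Pi.single i 1)

/-- ω = e₁₂₃ − e₁₄₅ − e₁₆₇ − e₂₄₆ + e₂₅₇ − e₃₄₇ − e₃₅₆ as a Clifford algebra element. -/
noncomputable def ω : CliffordAlgebra Q :=
  e 0 * e 1 * e 2 - e 0 * e 3 * e 4 - e 0 * e 5 * e 6 - e 1 * e 3 * e 5
    + e 1 * e 4 * e 6 - e 2 * e 3 * e 6 - e 2 * e 4 * e 5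

/-- The characteristic torsion element T = 2ω − 8e₁₂₃. -/
noncomputable def T : CliffordAlgebra Q := (2 : ℝ) • ω - (8 : ℝ) • (e 0 * e 1 * e 2)

private lemma Q_single (i : Fin 7) : Q (Pi.single i 1) = -1 := by
  rw [Q, QuadraticMap.weightedSumSquares_apply]
  rw [Finset.sum_eq_single i]
  · simp
  · intro k _ hk; simp [Pi.single_eq_of_ne hk]
  · intro h; exact absurd (Finset.mem_univ i) h

private lemma ortho {i j : Fin 7} (h : j ≠ i) :
    Q.IsOrtho (Pi.single j 1) (Pi.single i 1) := by
  rw [QuadraticMap.isOrtho_def]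
  rw [Q, QuadraticMap.weightedSumSquares_apply, QuadraticMap.weightedSumSquares_apply,
    QuadraticMap.weightedSumSquares_apply, ← Finset.sum_add_distrib]
  refine Finset.sum_congr rfl fun k _ => ?_
  rcases eq_or_ne k j with rfl | hj
  · simp [Pi.single_eq_same, Pi.single_eq_of_ne h]
  · rcases eq_or_ne k i with rfl | hi
    · simp [Pi.single_eq_same, Pi.single_eq_of_ne hj]
    · simp [Pi.single_eq_of_ne hj, Pi.single_eq_of_ne hi]

private lemma e_sq (i : Fin 7) : e i * e i = -1 := by
  rw [e, CliffordAlgebra.ι_sq_scalar, Q_single, map_neg, map_one]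

private lemma e_sq' (i : Fin 7) (x : CliffordAlgebra Q) : e i * (e i * x) = -x := by
  rw [← mul_assoc, e_sq, neg_one_mul]

private lemma e_swap {i j : Fin 7} (h : j ≠ i) : e j * e i = -(e i * e j) :=
  CliffordAlgebra.ι_mul_ι_comm_of_isOrtho (ortho h)

private lemma e_swap' {i j : Fin 7} (h : j ≠ i) (x : CliffordAlgebra Q) :
    e j * (e i * x) = -(e i * (e j * x)) := by
  rw [← mul_assoc, e_swap h, neg_mul, mul_assoc]
private lemma q0 : e 0 * e 0 = -1 := e_sq 0
private lemma q0' (x : CliffordAlgebra Q) : e 0 * (e 0 * x) = -x := e_sq' 0 x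
private lemma q1 : e 1 * e 1 = -1 := e_sq 1
private lemma q1' (x : CliffordAlgebra Q) : e 1 * (e 1 * x) = -x := e_sq' 1 x
private lemma q2 : e 2 * e 2 = -1 := e_sq 2
private lemma q2' (x : CliffordAlgebra Q) : e 2 * (e 2 * x) = -x := e_sq' 2 x
private lemma q3 : e 3 * e 3 = -1 := e_sq 3
private lemma q3' (x : CliffordAlgebra Q) : e 3 * (e 3 * x) = -x := e_sq' 3 x
private lemma q4 : e 4 * e 4 = -1 := e_sq 4
private lemma q4' (x : CliffordAlgebra Q) : e 4 * (e 4 * x) = -x := e_sq' 4 x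
private lemma q5 : e 5 * e 5 = -1 := e_sq 5
private lemma q5' (x : CliffordAlgebra Q) : e 5 * (e 5 * x) = -x := e_sq' 5 x
private lemma q6 : e 6 * e 6 = -1 := e_sq 6
private lemma q6' (x : CliffordAlgebra Q) : e 6 * (e 6 * x) = -x := e_sq' 6 x
private lemma w10 : e 1 * e 0 = -(e 0 * e 1) := e_swap (by decide)
private lemma w10' (x : CliffordAlgebra Q) : e 1 * (e 0 * x) = -(e 0 * (e 1 * x)) := e_swap' (by decide) x
private lemma w20 : e 2 * e 0 = -(e 0 * e 2) := e_swap (by decide)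
private lemma w20' (x : CliffordAlgebra Q) : e 2 * (e 0 * x) = -(e 0 * (e 2 * x)) := e_swap' (by decide) x
private lemma w21 : e 2 * e 1 = -(e 1 * e 2) := e_swap (by decide)
private lemma w21' (x : CliffordAlgebra Q) : e 2 * (e 1 * x) = -(e 1 * (e 2 * x)) := e_swap' (by decide) x
private lemma w30 : e 3 * e 0 = -(e 0 * e 3) := e_swap (by decide)
private lemma w30' (x : CliffordAlgebra Q) : e 3 * (e 0 * x) = -(e 0 * (e 3 * x)) := e_swap' (by decide) x
private lemma w31 : e 3 * e 1 = -(e 1 * e 3) := e_swap (by decide)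
private lemma w31' (x : CliffordAlgebra Q) : e 3 * (e 1 * x) = -(e 1 * (e 3 * x)) := e_swap' (by decide) x
private lemma w32 : e 3 * e 2 = -(e 2 * e 3) := e_swap (by decide)
private lemma w32' (x : CliffordAlgebra Q) : e 3 * (e 2 * x) = -(e 2 * (e 3 * x)) := e_swap' (by decide) x
private lemma w40 : e 4 * e 0 = -(e 0 * e 4) := e_swap (by decide)
private lemma w40' (x : CliffordAlgebra Q) : e 4 * (e 0 * x) = -(e 0 * (e 4 * x)) := e_swap' (by decide) x
private lemma w41 : e 4 * e 1 = -(e 1 * e 4) := e_swap (by decide)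
private lemma w41' (x : CliffordAlgebra Q) : e 4 * (e 1 * x) = -(e 1 * (e 4 * x)) := e_swap' (by decide) x
private lemma w42 : e 4 * e 2 = -(e 2 * e 4) := e_swap (by decide)
private lemma w42' (x : CliffordAlgebra Q) : e 4 * (e 2 * x) = -(e 2 * (e 4 * x)) := e_swap' (by decide) x
private lemma w43 : e 4 * e 3 = -(e 3 * e 4) := e_swap (by decide)
private lemma w43' (x : CliffordAlgebra Q) : e 4 * (e 3 * x) = -(e 3 * (e 4 * x)) := e_swap' (by decide) x
private lemma w50 : e 5 * e 0 = -(e 0 * e 5) := e_swap (by decide)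
private lemma w50' (x : CliffordAlgebra Q) : e 5 * (e 0 * x) = -(e 0 * (e 5 * x)) := e_swap' (by decide) x
private lemma w51 : e 5 * e 1 = -(e 1 * e 5) := e_swap (by decide)
private lemma w51' (x : CliffordAlgebra Q) : e 5 * (e 1 * x) = -(e 1 * (e 5 * x)) := e_swap' (by decide) x
private lemma w52 : e 5 * e 2 = -(e 2 * e 5) := e_swap (by decide)
private lemma w52' (x : CliffordAlgebra Q) : e 5 * (e 2 * x) = -(e 2 * (e 5 * x)) := e_swap' (by decide) x
private lemma w53 : e 5 * e 3 = -(e 3 * e 5) := e_swap (by decide)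
private lemma w53' (x : CliffordAlgebra Q) : e 5 * (e 3 * x) = -(e 3 * (e 5 * x)) := e_swap' (by decide) x
private lemma w54 : e 5 * e 4 = -(e 4 * e 5) := e_swap (by decide)
private lemma w54' (x : CliffordAlgebra Q) : e 5 * (e 4 * x) = -(e 4 * (e 5 * x)) := e_swap' (by decide) x
private lemma w60 : e 6 * e 0 = -(e 0 * e 6) := e_swap (by decide)
private lemma w60' (x : CliffordAlgebra Q) : e 6 * (e 0 * x) = -(e 0 * (e 6 * x)) := e_swap' (by decide) x
private lemma w61 : e 6 * e 1 = -(e 1 * e 6) := e_swap (by decide)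
private lemma w61' (x : CliffordAlgebra Q) : e 6 * (e 1 * x) = -(e 1 * (e 6 * x)) := e_swap' (by decide) x
private lemma w62 : e 6 * e 2 = -(e 2 * e 6) := e_swap (by decide)
private lemma w62' (x : CliffordAlgebra Q) : e 6 * (e 2 * x) = -(e 2 * (e 6 * x)) := e_swap' (by decide) x
private lemma w63 : e 6 * e 3 = -(e 3 * e 6) := e_swap (by decide)
private lemma w63' (x : CliffordAlgebra Q) : e 6 * (e 3 * x) = -(e 3 * (e 6 * x)) := e_swap' (by decide) x
private lemma w64 : e 6 * e 4 = -(e 4 * e 6) := e_swap (by decide)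
private lemma w64' (x : CliffordAlgebra Q) : e 6 * (e 4 * x) = -(e 4 * (e 6 * x)) := e_swap' (by decide) x
private lemma w65 : e 6 * e 5 = -(e 5 * e 6) := e_swap (by decide)
private lemma w65' (x : CliffordAlgebra Q) : e 6 * (e 5 * x) = -(e 5 * (e 6 * x)) := e_swap' (by decide) x


private lemma keyI0 : T + (6 : ℝ) • (1 : CliffordAlgebra Q) = (((43 : ℝ)/42) • (1 : CliffordAlgebra Q) + ((-7 : ℝ)/6) • (e 0 * e 1 * e 2) + ((4 : ℝ)/21) • (e 0 * e 1 * e 3 * e 6) + ((4 : ℝ)/21) • (e 0 * e 1 * e 4 * e 5) + ((-4 : ℝ)/21) • (e 0 * e 2 * e 3 * e 5) + ((4 : ℝ)/21) • (e 0 * e 2 * e 4 * e 6) + ((4 : ℝ)/21) • (e 1 * e 2 * e 3 * e 4) + ((4 : ℝ)/21) • (e 1 * e 2 * e 5 * e 6) + ((-1 : ℝ)/42) • (e 3 * e 4 * e 5 * e 6) + ((1 : ℝ)/6) • (e 0 * e 1 * e 2 * e 3 * e 4 * e 5 * e 6)) * (ω + (7 : ℝ) • 1) := by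
  rw [T, ω]
  simp only [mul_add, add_mul, mul_sub, sub_mul, mul_neg, neg_mul, neg_neg, smul_mul_assoc,
    mul_smul_comm, mul_assoc, mul_one, one_mul, q0, q0', q1, q1', q2, q2', q3, q3', q4, q4', q5, q5', q6, q6', w10, w10', w20, w20', w21, w21', w30, w30', w31, w31', w32, w32', w40, w40', w41, w41', w42, w42', w43, w43', w50, w50', w51, w51', w52, w52', w53, w53', w54, w54', w60, w60', w61, w61', w62, w62', w63, w63', w64, w64', w65, w65']
  module

private lemma keyI1_0 : T * e 0 - (10 : ℝ) • e 0 = (((-17 : ℝ)/12) • (e 0) + ((19 : ℝ)/28) • (e 1 * e 2) + ((41 : ℝ)/84) • (e 3 * e 4) + ((41 : ℝ)/84) • (e 5 * e 6) + ((2 : ℝ)/21) • (e 0 * e 1 * e 3 * e 5) + ((-2 : ℝ)/21) • (e 0 * e 1 * e 4 * e 6) + ((2 : ℝ)/21) • (e 0 * e 2 * e 3 * e 6) + ((2 : ℝ)/21) • (e 0 * e 2 * e 4 * e 5) + ((1 : ℝ)/12) • (e 0 * e 1 * e 2 * e 3 * e 4) + ((1 : ℝ)/12) • (e 0 * e 1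 * e 2 * e 5 * e 6) + ((1 : ℝ)/12) • (e 0 * e 3 * e 4 * e 5 * e 6) + ((-1 : ℝ)/84) • (e 1 * e 2 * e 3 * e 4 * e 5 * e 6)) * (ω + (7 : ℝ) • 1) := by
  rw [T, ω]
  simp only [mul_add, add_mul, mul_sub, sub_mul, mul_neg, neg_mul, neg_neg, smul_mul_assoc,
    mul_smul_comm, mul_assoc, mul_one, one_mul, q0, q0', q1, q1', q2, q2', q3, q3', q4, q4', q5, q5', q6, q6', w10, w10', w20, w20', w21, w21', w30, w30', w31, w31', w32, w32', w40, w40', w41, w41', w42, w42', w43, w43', w50, w50', w51, w51', w52, w52', w53, w53', w54, w54', w60, w60', w61, w61', w62, w62', w63, w63', w64, w64', w65, w65']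
  module

private lemma keyI1_1 : T * e 1 - (10 : ℝ) • e 1 = (((-17 : ℝ)/12) • (e 1) + ((-19 : ℝ)/28) • (e 0 * e 2) + ((41 : ℝ)/84) • (e 3 * e 5) + ((-41 : ℝ)/84) • (e 4 * e 6) + ((-2 : ℝ)/21) • (e 0 * e 1 * e 3 * e 4) + ((-2 : ℝ)/21) • (e 0 * e 1 * e 5 * e 6) + ((2 : ℝ)/21) • (e 1 * e 2 * e 3 * e 6) + ((2 : ℝ)/21) • (e 1 * e 2 * e 4 * e 5) + ((1 : ℝ)/12) • (e 0 * e 1 * e 2 * e 3 * e 5) + ((-1 : ℝ)/12) • (e 0 * e 1 * e 2 * e 4 * e 6) + ((1 : ℝ)/12) • (e 1 * e 3 * e 4 * e 5 * e 6) + ((1 : ℝ)/84) • (e 0 * e 2 * e 3 * e 4 * e 5 * e 6)) * (ω + (7 : ℝ) • 1) := by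
  rw [T, ω]
  simp only [mul_add, add_mul, mul_sub, sub_mul, mul_neg, neg_mul, neg_neg, smul_mul_assoc,
    mul_smul_comm, mul_assoc, mul_one, one_mul, q0, q0', q1, q1', q2, q2', q3, q3', q4, q4', q5, q5', q6, q6', w10, w10', w20, w20', w21, w21', w30, w30', w31, w31', w32, w32', w40, w40', w41, w41', w42, w42', w43, w43', w50, w50', w51, w51', w52, w52', w53, w53', w54, w54', w60, w60', w61, w61', w62, w62', w63, w63', w64, w64', w65, w65']
  module

private lemma keyI1_2 : T * e 2 - (10 : ℝ) • e 2 = (((-17 : ℝ)/12) • (e 2) + ((19 : ℝ)/28) • (e 0 * e 1) + ((41 : ℝ)/84) • (e 3 * e 6) + ((41 : ℝ)/84) • (e 4 * e 5) + ((-2 : ℝ)/21) • (e 0 * e 2 * e 3 * e 4) + ((-2 : ℝ)/21) • (e 0 * e 2 * e 5 * e 6) + ((-2 : ℝ)/21) • (e 1 * e 2 * e 3 * e 5) + ((2 : ℝ)/21) • (e 1 * e 2 * e 4 * e 6) + ((1 : ℝ)/12) • (e 0 * e 1 * e 2 * e 3 * e 6) + ((1 : ℝ)/12) • (e 0 * e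 1 * e 2 * e 4 * e 5) + ((1 : ℝ)/12) • (e 2 * e 3 * e 4 * e 5 * e 6) + ((-1 : ℝ)/84) • (e 0 * e 1 * e 3 * e 4 * e 5 * e 6)) * (ω + (7 : ℝ) • 1) := by
  rw [T, ω]
  simp only [mul_add, add_mul, mul_sub, sub_mul, mul_neg, neg_mul, neg_neg, smul_mul_assoc,
    mul_smul_comm, mul_assoc, mul_one, one_mul, q0, q0', q1, q1', q2, q2', q3, q3', q4, q4', q5, q5', q6, q6', w10, w10', w20, w20', w21, w21', w30, w30', w31, w31', w32, w32', w40, w40', w41, w41', w42, w42', w43, w43', w50, w50', w51, w51', w52, w52', w53, w53', w54, w54', w60, w60', w61, w61', w62, w62', w63, w63', w64, w64', w65, w65']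
  module

private lemma keyI2_3 : T * e 3 + (6 : ℝ) • e 3 = (((43 : ℝ)/42) • (e 3) + ((-3 : ℝ)/28) • (e 0 * e 1 * e 6) + ((3 : ℝ)/28) • (e 0 * e 2 * e 5) + ((-3 : ℝ)/28) • (e 1 * e 2 * e 4) + ((23 : ℝ)/84) • (e 4 * e 5 * e 6) + ((-7 : ℝ)/12) • (e 0 * e 1 * e 2 * e 3) + ((-7 : ℝ)/12) • (e 0 * e 3 * e 5 * e 6) + ((7 : ℝ)/12) • (e 1 * e 3 * e 4 * e 6) + ((-7 : ℝ)/12) • (e 2 * e 3 * e 4 * e 5) + ((4 : ℝ)/21) • (e 0 * e 1 * e 3 * e 4 * e 5) + ((4 : ℝ)/21) • (e 0 * e 2 * e 3 * e 4 * e 6) + ((4 : ℝ)/21) • (e 1 * e 2 * e 3 * e 5 * e 6) + ((1 : ℝ)/6) • (e 0 * e 1 * e 2 * e 4 * e 5 * e 6)) * (ω + (7 : ℝ) • 1) := by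
  rw [T, ω]
  simp only [mul_add, add_mul, mul_sub, sub_mul, mul_neg, neg_mul, neg_neg, smul_mul_assoc,
    mul_smul_comm, mul_assoc, mul_one, one_mul, q0, q0', q1, q1', q2, q2', q3, q3', q4, q4', q5, q5', q6, q6', w10, w10', w20, w20', w21, w21', w30, w30', w31, w31', w32, w32', w40, w40', w41, w41', w42, w42', w43, w43', w50, w50', w51, w51', w52, w52', w53, w53', w54, w54', w60, w60', w61, w61', w62, w62', w63, w63', w64, w64', w65, w65']
  module

private lemma keyI2_4 : T * e 4 + (6 : ℝ) • e 4 = (((43 : ℝ)/42) • (e 4) + ((-3 : ℝ)/28) • (e 0 * e 1 * e 5) + ((-3 : ℝ)/28) • (e 0 * e 2 * e 6) + ((3 : ℝ)/28) • (e 1 * e 2 * e 3) + ((-23 : ℝ)/84) • (e 3 * e 5 * e 6) + ((-7 : ℝ)/12) • (e 0 * e 1 * e 2 * e 4) + ((-7 : ℝ)/12) • (e 0 * e 4 * e 5 * e 6) + ((7 : ℝ)/12) • (e 1 * e 3 * e 4 * e 5) + ((7 : ℝ)/12) • (e 2 * e 3 * e 4 * e 6) + ((-4 : ℝ)/21) •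 (e 0 * e 1 * e 3 * e 4 * e 6) + ((4 : ℝ)/21) • (e 0 * e 2 * e 3 * e 4 * e 5) + ((4 : ℝ)/21) • (e 1 * e 2 * e 4 * e 5 * e 6) + ((-1 : ℝ)/6) • (e 0 * e 1 * e 2 * e 3 * e 5 * e 6)) * (ω + (7 : ℝ) • 1) := by
  rw [T, ω]
  simp only [mul_add, add_mul, mul_sub, sub_mul, mul_neg, neg_mul, neg_neg, smul_mul_assoc,
    mul_smul_comm, mul_assoc, mul_one, one_mul, q0, q0', q1, q1', q2, q2', q3, q3', q4, q4', q5, q5', q6, q6', w10, w10', w20, w20', w21, w21', w30, w30', w31, w31', w32, w32', w40, w40', w41, w41', w42, w42', w43, w43', w50, w50', w51, w51', w52, w52', w53, w53', w54, w54', w60, w60', w61, w61', w62, w62', w63, w63', w64, w64', w65, w65']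
  module

private lemma keyI2_5 : T * e 5 + (6 : ℝ) • e 5 = (((43 : ℝ)/42) • (e 5) + ((3 : ℝ)/28) • (e 0 * e 1 * e 4) + ((-3 : ℝ)/28) • (e 0 * e 2 * e 3) + ((-3 : ℝ)/28) • (e 1 * e 2 * e 6) + ((23 : ℝ)/84) • (e 3 * e 4 * e 6) + ((-7 : ℝ)/12) • (e 0 * e 1 * e 2 * e 5) + ((-7 : ℝ)/12) • (e 0 * e 3 * e 4 * e 5) + ((-7 : ℝ)/12) • (e 1 * e 4 * e 5 * e 6) + ((7 : ℝ)/12) • (e 2 * e 3 * e 5 * e 6) + ((-4 : ℝ)/21) • (e 0 * e 1 * e 3 * e 5 * e 6) + ((-4 : ℝ)/21) • (e 0 * e 2 * e 4 * e 5 * e 6) + ((4 : ℝ)/21) • (e 1 * e 2 * e 3 * e 4 * e 5) + ((1 : ℝ)/6) • (e 0 * e 1 * e 2 * e 3 * e 4 * e 6)) * (ω + (7 : ℝ) • 1) := by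
  rw [T, ω]
  simp only [mul_add, add_mul, mul_sub, sub_mul, mul_neg, neg_mul, neg_neg, smul_mul_assoc,
    mul_smul_comm, mul_assoc, mul_one, one_mul, q0, q0', q1, q1', q2, q2', q3, q3', q4, q4', q5, q5', q6, q6', w10, w10', w20, w20', w21, w21', w30, w30', w31, w31', w32, w32', w40, w40', w41, w41', w42, w42', w43, w43', w50, w50', w51, w51', w52, w52', w53, w53', w54, w54', w60, w60', w61, w61', w62, w62', w63, w63', w64, w64', w65, w65']
  module

private lemma keyI2_6 : T * e 6 + (6 : ℝ) • e 6 = (((43 : ℝ)/42) • (e 6) + ((3 : ℝ)/28) • (e 0 * e 1 * e 3) + ((3 : ℝ)/28) • (e 0 * e 2 * e 4) + ((3 : ℝ)/28) • (e 1 * e 2 * e 5) + ((-23 : ℝ)/84) • (e 3 * e 4 * e 5) + ((-7 : ℝ)/12) • (e 0 * e 1 * e 2 * e 6) + ((-7 : ℝ)/12) • (e 0 * e 3 * e 4 * e 6) + ((-7 : ℝ)/12) • (e 1 * e 3 * e 5 * e 6) + ((-7 : ℝ)/12) • (e 2 * e 4 * e 5 * e 6) + ((4 : ℝ)/21) • (e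 0 * e 1 * e 4 * e 5 * e 6) + ((-4 : ℝ)/21) • (e 0 * e 2 * e 3 * e 5 * e 6) + ((4 : ℝ)/21) • (e 1 * e 2 * e 3 * e 4 * e 6) + ((-1 : ℝ)/6) • (e 0 * e 1 * e 2 * e 3 * e 4 * e 5)) * (ω + (7 : ℝ) • 1) := by
  rw [T, ω]
  simp only [mul_add, add_mul, mul_sub, sub_mul, mul_neg, neg_mul, neg_neg, smul_mul_assoc,
    mul_smul_comm, mul_assoc, mul_one, one_mul, q0, q0', q1, q1', q2, q2', q3, q3', q4, q4', q5, q5', q6, q6', w10, w10', w20, w20', w21, w21', w30, w30', w31, w31', w32, w32', w40, w40', w41, w41', w42, w42', w43, w43', w50, w50', w51, w51', w52, w52', w53, w53', w54, w54', w60, w60', w61, w61', w62, w62', w63, w63', w64, w64', w65, w65']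
  module

/-- for the canonical unit spinor Ψ₀ (ω·Ψ₀ = −7Ψ₀),
T·X·Ψ₀ = −(5/3)X·T·Ψ₀ = 10·X·Ψ₀ for vertical X ∈ {e₁,e₂,e₃}, and
T·X·Ψ₀ = X·T·Ψ₀ = −6·X·Ψ₀ for horizontal X ∈ {e₄,e₅,e₆,e₇}. -/
theorem stmt9 (S : Type) [NormedAddCommGroup S] [InnerProductSpace ℝ S]
    [Module (CliffordAlgebra Q) S] [IsScalarTower ℝ (CliffordAlgebra Q) S]
    (hdim : Module.finrank ℝ S = 8)
    (Ψ₀ : S) (hunit : ‖Ψ₀‖ = 1) (hΨ : ω • Ψ₀ = (-7 : ℝ) • Ψ₀) :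
    (∀ i : Fin 7, i = 0 ∨ i = 1 ∨ i = 2 →
      T • (e i • Ψ₀) = (-(5 / 3) : ℝ) • (e i • (T • Ψ₀))
        ∧ T • (e i • Ψ₀) = (10 : ℝ) • (e i • Ψ₀))
    ∧ (∀ i : Fin 7, i = 3 ∨ i = 4 ∨ i = 5 ∨ i = 6 →
      T • (e i • Ψ₀) = e i • (T • Ψ₀)
        ∧ T • (e i • Ψ₀) = (-6 : ℝ) • (e i • Ψ₀)) := by
  have h7 : (ω + (7 : ℝ) • (1 : CliffordAlgebra Q)) • Ψ₀ = 0 := by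
    rw [add_smul, hΨ, smul_assoc, one_smul, ← add_smul]
    norm_num
  have hT : T • Ψ₀ = (-6 : ℝ) • Ψ₀ := by
    have h := congrArg (fun z : CliffordAlgebra Q => z • Ψ₀) keyI0
    simp only [add_smul, mul_smul, h7, smul_zero, smul_assoc, one_smul] at h
    have h2 := eq_neg_of_add_eq_zero_left h
    rw [h2, ← neg_smul]
  have hV : ∀ i : Fin 7, T * e i - (10 : ℝ) • e i =
      (T * e i - (10 : ℝ) • e i) → True := fun _ _ => trivial
  have vert : ∀ i : Fin 7, (T * e i - (10 : ℝ) • e i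
        = ((0:ℝ)) • (1 : CliffordAlgebra Q) * (ω + (7 : ℝ) • 1)) → True := fun _ _ => trivial
  clear hV vert
  have hmain : ∀ (i : Fin 7) (X : CliffordAlgebra Q) (c : ℝ),
      (T * e i - c • e i = X * (ω + (7 : ℝ) • 1)) →
      T • (e i • Ψ₀) = c • (e i • Ψ₀) := by
    intro i X c hkey
    have h := congrArg (fun z : CliffordAlgebra Q => z • Ψ₀) hkey
    simp only [sub_smul, mul_smul, h7, smul_zero, smul_assoc] at h
    exact sub_eq_zero.mp h
  have hv0 : T • (e 0 • Ψ₀) = (10 : ℝ) • (e 0 • Ψ₀) := hmain 0 _ 10 keyI1_0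
  have hv1 : T • (e 1 • Ψ₀) = (10 : ℝ) • (e 1 • Ψ₀) := hmain 1 _ 10 keyI1_1
  have hv2 : T • (e 2 • Ψ₀) = (10 : ℝ) • (e 2 • Ψ₀) := hmain 2 _ 10 keyI1_2
  have hmain' : ∀ (i : Fin 7) (X : CliffordAlgebra Q) (c : ℝ),
      (T * e i + c • e i = X * (ω + (7 : ℝ) • 1)) →
      T • (e i • Ψ₀) = (-c) • (e i • Ψ₀) := by
    intro i X c hkey
    have h := congrArg (fun z : CliffordAlgebra Q => z • Ψ₀) hkey
    simp only [add_smul, mul_smul, h7, smul_zero, smul_assoc] at h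
    have h2 := eq_neg_of_add_eq_zero_left h
    rw [h2, ← neg_smul]
  have hh3 : T • (e 3 • Ψ₀) = (-6 : ℝ) • (e 3 • Ψ₀) := hmain' 3 _ 6 keyI2_3
  have hh4 : T • (e 4 • Ψ₀) = (-6 : ℝ) • (e 4 • Ψ₀) := hmain' 4 _ 6 keyI2_4
  have hh5 : T • (e 5 • Ψ₀) = (-6 : ℝ) • (e 5 • Ψ₀) := hmain' 5 _ 6 keyI2_5
  have hh6 : T • (e 6 • Ψ₀) = (-6 : ℝ) • (e 6 • Ψ₀) := hmain' 6 _ 6 keyI2_6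
  have comm : ∀ (i : Fin 7) (r : ℝ), e i • (r • Ψ₀) = r • (e i • Ψ₀) := fun i r =>
    (smul_comm r (e i) Ψ₀).symm
  constructor
  · intro i hi
    have key : T • (e i • Ψ₀) = (10 : ℝ) • (e i • Ψ₀) := by
      rcases hi with rfl | rfl | rfl
      exacts [hv0, hv1, hv2]
    refine ⟨?_, key⟩
    rw [key, hT, comm, smul_smul]
    norm_num
  · intro i hi
    have key : T • (e i • Ψ₀) = (-6 : ℝ) • (e i • Ψ₀) := by
      rcases hi with rfl | rfl | rfl | rfl
      exacts [hh3, hh4, hh5, hh6]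
    refine ⟨?_, key⟩
    rw [key, hT, comm]
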